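/- arXiv:2304.14929 — 6 statements merged into one kernel-verified Lean document; each statement's English description precedes it below -/
import Mathlib

section
/- Let D be a square-free positive integer with D ≡ 1 (mod 4), and let μ, m be integers with m > 0 and μ² ≡ D (mod m). If either m is odd, or m is even and (D - μ²)/m is odd, then the ideal I = (m, √D + μ) of ℤ[√D] is invertible, with inverse (1/m)·(m, √D − μ). -/
/-- For `D` squarefree positive, `D ≡ 1 [ZMOD 4]`, `μ² ≡ D (mod m)`, `m > 0`,
if `m` is odd or (`m` even and `(D - μ²)/m` odd), then the ideal `(m, √D + μ)` of `ℤ[√D]`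
is invertible, with inverse `(1/m)·(m, √D − μ)` (equivalently `I·Ī = (m)`). -/
theorem stmt_0 (D : ℤ) (hDpos : 0 < D) (hsf : Squarefree D) (hD4 : D % 4 = 1)
    (μ m : ℤ) (hm : 0 < m) (hroot : m ∣ D - μ ^ 2)
    (hodd : Odd m ∨ (Even m ∧ Odd ((D - μ ^ 2) / m))) :
    (∃ J : FractionalIdeal (nonZeroDivisors (Zsqrtd D)) (FractionRing (Zsqrtd D)),
        (↑(Ideal.span {(m : Zsqrtd D), Zsqrtd.sqrtd + (μ : Zsqrtd D)}) :
          FractionalIdeal (nonZeroDivisors (Zsqrtd D)) (FractionRing (Zsqrtd D))) * J = 1) ∧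
    Ideal.span {(m : Zsqrtd D), Zsqrtd.sqrtd + (μ : Zsqrtd D)} *
        Ideal.span {(m : Zsqrtd D), Zsqrtd.sqrtd - (μ : Zsqrtd D)} =
      Ideal.span {(m : Zsqrtd D)} := by
  classical
  set k : ℤ := (D - μ ^ 2) / m with hkdef
  have hk : m * k = D - μ ^ 2 := Int.mul_ediv_cancel' hroot
  -- coprimality of m, k, 2μ
  have hgcd : Int.gcd m (Int.gcd k (2 * μ)) = 1 := by
    by_contra hne
    obtain ⟨p, hp, hpd⟩ := Nat.exists_prime_and_dvd hne
    have hpm : (p : ℤ) ∣ m :=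
      dvd_trans (Int.natCast_dvd_natCast.mpr hpd) (Int.gcd_dvd_left _ _)
    have hpin : (p : ℤ) ∣ (Int.gcd k (2 * μ) : ℤ) :=
      dvd_trans (Int.natCast_dvd_natCast.mpr hpd) (Int.gcd_dvd_right _ _)
    have hpk : (p : ℤ) ∣ k := hpin.trans (Int.gcd_dvd_left _ _)
    have hpμ2 : (p : ℤ) ∣ 2 * μ := hpin.trans (Int.gcd_dvd_right _ _)
    by_cases hp2 : p = 2
    · subst hp2
      rcases hodd with h | ⟨he, hok⟩
      · obtain ⟨t, ht⟩ := h; obtain ⟨s, hs⟩ := hpm; omega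
      · obtain ⟨t, ht⟩ := hok; obtain ⟨s, hs⟩ := hpk; push_cast at hs; omega
    · have hP : Prime (p : ℤ) := Nat.prime_iff_prime_int.mp hp
      have hpμ : (p : ℤ) ∣ μ := by
        rcases hP.dvd_mul.mp hpμ2 with h | h
        · exfalso
          have : p ∣ 2 := by exact_mod_cast h
          exact hp2 ((Nat.prime_dvd_prime_iff_eq hp Nat.prime_two).mp this)
        · exact h
      have hsq : (p : ℤ) * (p : ℤ) ∣ D := by
        have h1 : (p : ℤ) * (p : ℤ) ∣ μ ^ 2 := by
          rw [sq]; exact mul_dvd_mul hpμ hpμ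
        have h2 : (p : ℤ) * (p : ℤ) ∣ D - μ ^ 2 := hk ▸ mul_dvd_mul hpm hpk
        have := dvd_add h2 h1
        simpa using this
      have := hsf _ hsq
      rw [Int.isUnit_iff] at this
      have := hp.two_le
      omega
  obtain ⟨a, b, hab⟩ := Int.isCoprime_iff_gcd_eq_one.mpr hgcd
  have hg : (Int.gcd k (2 * μ) : ℤ) = k * Int.gcdA k (2 * μ) + 2 * μ * Int.gcdB k (2 * μ) :=
    Int.gcd_eq_gcd_ab k (2 * μ)
  set α := Int.gcdA k (2 * μ)
  set β := Int.gcdB k (2 * μ)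
  have hz : m = a * (m * m) + b * α * (m * k) + b * β * (2 * μ * m) := by
    have h1 : a * m + b * (k * α + 2 * μ * β) = 1 := by rw [← hg]; exact hab
    linear_combination -m * h1
  -- key identity in Zsqrtd D
  have hkey : (Zsqrtd.sqrtd + (μ : Zsqrtd D)) * (Zsqrtd.sqrtd - (μ : Zsqrtd D))
      = (m : Zsqrtd D) * (k : Zsqrtd D) := by
    have hc : ((m * k : ℤ) : Zsqrtd D) = ((D - μ ^ 2 : ℤ) : Zsqrtd D) := by rw [hk]
    push_cast at hc
    have hd : (Zsqrtd.sqrtd : Zsqrtd D) * Zsqrtd.sqrtd = (D : Zsqrtd D) := Zsqrtd.dmuld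
    linear_combination hd - hc
  set I := Ideal.span {(m : Zsqrtd D), Zsqrtd.sqrtd + (μ : Zsqrtd D)} with hI
  set Ibar := Ideal.span {(m : Zsqrtd D), Zsqrtd.sqrtd - (μ : Zsqrtd D)} with hIbar
  have hprod : I * Ibar = Ideal.span {(m : Zsqrtd D)} := by
    apply le_antisymm
    · rw [hI, hIbar, Ideal.span_mul_span']
      rw [Ideal.span_le]
      rintro x ⟨u, hu, v, hv, rfl⟩
      simp only [Set.mem_insert_iff, Set.mem_singleton_iff] at hu hv
      rw [SetLike.mem_coe, Ideal.mem_span_singleton]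
      beta_reduce
      rcases hu with rfl | rfl <;> rcases hv with rfl | rfl
      · exact Dvd.intro _ rfl
      · exact Dvd.intro _ rfl
      · exact Dvd.intro_left _ rfl
      · rw [hkey]; exact Dvd.intro _ rfl
    · rw [Ideal.span_le]
      intro x hx
      simp only [Set.mem_singleton_iff] at hx
      subst hx
      rw [SetLike.mem_coe]
      have mem1 : (m : Zsqrtd D) ∈ I := Ideal.subset_span (by simp)
      have mem2 : Zsqrtd.sqrtd + (μ : Zsqrtd D) ∈ I := Ideal.subset_span (by simp)
      have mem1' : (m : Zsqrtd D) ∈ Ibar := Ideal.subset_span (by simp)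
      have mem2' : Zsqrtd.sqrtd - (μ : Zsqrtd D) ∈ Ibar := Ideal.subset_span (by simp)
      have h1 : (m : Zsqrtd D) * (m : Zsqrtd D) ∈ I * Ibar := Ideal.mul_mem_mul mem1 mem1'
      have h2 : (m : Zsqrtd D) * (Zsqrtd.sqrtd - (μ : Zsqrtd D)) ∈ I * Ibar :=
        Ideal.mul_mem_mul mem1 mem2'
      have h3 : (Zsqrtd.sqrtd + (μ : Zsqrtd D)) * (m : Zsqrtd D) ∈ I * Ibar :=
        Ideal.mul_mem_mul mem2 mem1'
      have h4 : (Zsqrtd.sqrtd + (μ : Zsqrtd D)) * (Zsqrtd.sqrtd - (μ : Zsqrtd D)) ∈ I * Ibar :=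
        Ideal.mul_mem_mul mem2 mem2'
      have hM : (m : Zsqrtd D) =
          (a : Zsqrtd D) * ((m : Zsqrtd D) * (m : Zsqrtd D)) +
          ((b * α : ℤ) : Zsqrtd D) * ((Zsqrtd.sqrtd + (μ : Zsqrtd D)) * (Zsqrtd.sqrtd - (μ : Zsqrtd D))) +
          ((b * β : ℤ) : Zsqrtd D) * ((Zsqrtd.sqrtd + (μ : Zsqrtd D)) * (m : Zsqrtd D)) +
          ((-(b * β) : ℤ) : Zsqrtd D) * ((m : Zsqrtd D) * (Zsqrtd.sqrtd - (μ : Zsqrtd D))) := by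
        have hzR : ((m : ℤ) : Zsqrtd D) =
            ((a * (m * m) + b * α * (m * k) + b * β * (2 * μ * m) : ℤ) : Zsqrtd D) := by
          exact_mod_cast congrArg (fun t : ℤ => (t : Zsqrtd D)) hz
        push_cast at hzR
        rw [hkey]
        push_cast
        linear_combination hzR
      rw [hM]
      exact add_mem (add_mem (add_mem (Ideal.mul_mem_left _ _ h1) (Ideal.mul_mem_left _ _ h4))
        (Ideal.mul_mem_left _ _ h3)) (Ideal.mul_mem_left _ _ h2)
  refine ⟨?_, hprod⟩
  have hmem : (m : Zsqrtd D) ∈ nonZeroDivisors (Zsqrtd D) := by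
    rw [mem_nonZeroDivisors_iff_right]
    intro x hx
    have hre := congrArg Zsqrtd.re hx
    have him := congrArg Zsqrtd.im hx
    simp only [Zsqrtd.re_mul, Zsqrtd.im_mul, Zsqrtd.re_intCast, Zsqrtd.im_intCast,
      Zsqrtd.re_zero, Zsqrtd.im_zero, mul_zero, add_zero, zero_mul] at hre him
    have hm0 : m ≠ 0 := hm.ne'
    rw [zero_add] at him
    have e1 : x.re = 0 := (mul_eq_zero.mp hre).resolve_right hm0
    have e2 : x.im = 0 := (mul_eq_zero.mp him).resolve_right hm0
    ext <;> simp [e1, e2]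
  obtain ⟨u, hu0⟩ := IsLocalization.map_units (M := nonZeroDivisors (Zsqrtd D))
    (FractionRing (Zsqrtd D)) ⟨(m : Zsqrtd D), hmem⟩
  have hu : (u : FractionRing (Zsqrtd D)) =
      algebraMap (Zsqrtd D) (FractionRing (Zsqrtd D)) (m : Zsqrtd D) := hu0
  refine ⟨FractionalIdeal.spanSingleton _ ((u⁻¹ : _) : FractionRing (Zsqrtd D)) *
    (↑Ibar : FractionalIdeal (nonZeroDivisors (Zsqrtd D)) (FractionRing (Zsqrtd D))), ?_⟩
  calc (↑I : FractionalIdeal (nonZeroDivisors (Zsqrtd D)) (FractionRing (Zsqrtd D))) *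
        (FractionalIdeal.spanSingleton _ ((u⁻¹ : _) : FractionRing (Zsqrtd D)) *
          (↑Ibar : FractionalIdeal (nonZeroDivisors (Zsqrtd D)) (FractionRing (Zsqrtd D))))
      = FractionalIdeal.spanSingleton _ ((u⁻¹ : _) : FractionRing (Zsqrtd D)) * ↑(I * Ibar) := by
        rw [FractionalIdeal.coeIdeal_mul]; ring
    _ = FractionalIdeal.spanSingleton _ ((u⁻¹ : _) : FractionRing (Zsqrtd D)) *
        FractionalIdeal.spanSingleton _ (algebraMap (Zsqrtd D) (FractionRing (Zsqrtd D)) (m : Zsqrtd D)) := by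
        rw [hprod, FractionalIdeal.coeIdeal_span_singleton]
    _ = 1 := by
        rw [← hu, FractionalIdeal.spanSingleton_mul_spanSingleton]
        simp
end

section
/- Let D be a square-free positive integer with D ≡ 1 (mod 4), and let μ, m be integers with m > 0, μ² ≡ D (mod m), such that m is even and (D − μ²)/m is even. Then the ideal I = (m, √D + μ) of ℤ[√D] is not invertible. -/
/-- For `D` squarefree positive with `D ≡ 1 (mod 4)`, `μ² ≡ D (mod m)`, `m > 0`,
if both `m` and `(D − μ²)/m` are even, then the ideal `(m, √D + μ)` of `ℤ[√D]`
is not invertible. -/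
theorem stmt_1 (D : ℤ) (hDpos : 0 < D) (hsf : Squarefree D) (hD4 : D % 4 = 1)
    (μ m : ℤ) (hm : 0 < m) (hroot : m ∣ D - μ ^ 2)
    (hme : Even m) (hfe : Even ((D - μ ^ 2) / m)) :
    ¬ ∃ J : FractionalIdeal (nonZeroDivisors (Zsqrtd D)) (FractionRing (Zsqrtd D)),
        (↑(Ideal.span {(m : Zsqrtd D), Zsqrtd.sqrtd + (μ : Zsqrtd D)}) :
          FractionalIdeal (nonZeroDivisors (Zsqrtd D)) (FractionRing (Zsqrtd D))) * J = 1 := by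
  rintro ⟨J, hJ⟩
  set I₀ : Ideal (Zsqrtd D) := Ideal.span {(m : (Zsqrtd D)), Zsqrtd.sqrtd + (μ : (Zsqrtd D))} with hI₀
  -- parity facts
  obtain ⟨m₀, hm₀⟩ := hme
  have hk2 : D - μ ^ 2 = m * ((D - μ ^ 2) / m) := (Int.mul_ediv_cancel' hroot).symm
  obtain ⟨k', hk'⟩ := hfe
  have hev : Even (D - μ ^ 2) := by
    rw [hk2]
    exact ⟨m₀ * ((D - μ ^ 2) / m), by rw [hm₀]; ring⟩
  obtain ⟨c0, hc0⟩ := hev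
  have hμodd : Odd μ := by
    rcases Int.even_or_odd μ with he | ho
    · exfalso
      obtain ⟨a, ha⟩ := he
      have hsqa : μ ^ 2 = 4 * a ^ 2 := by rw [ha]; ring
      omega
    · exact ho
  obtain ⟨t, ht⟩ := hμodd
  have hDeq : D = μ ^ 2 + m * (k' + k') := by rw [← hk']; omega
  -- the element x = (1+√D)/2
  have h2 : (2 : (Zsqrtd D)) ∈ nonZeroDivisors (Zsqrtd D) := by
    rw [mem_nonZeroDivisors_iff_right]
    intro z hz
    have hz2 : z * ((2 : ℤ) : (Zsqrtd D)) = 0 := by exact_mod_cast hz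
    have h1 := congrArg Zsqrtd.re hz2
    have h2 := congrArg Zsqrtd.im hz2
    simp [Zsqrtd.re_mul, Zsqrtd.im_mul, Zsqrtd.re_intCast, Zsqrtd.im_intCast] at h1 h2
    rw [Zsqrtd.ext_iff, Zsqrtd.re_zero, Zsqrtd.im_zero]
    constructor <;> omega
  set f : (Zsqrtd D) →+* (FractionRing (Zsqrtd D)) := algebraMap (Zsqrtd D) (FractionRing (Zsqrtd D)) with hf
  have hfinj : Function.Injective f := IsLocalization.injective (FractionRing (Zsqrtd D)) (le_refl (nonZeroDivisors (Zsqrtd D)))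
  set x : (FractionRing (Zsqrtd D)) := IsLocalization.mk' (FractionRing (Zsqrtd D)) ((1 + Zsqrtd.sqrtd : (Zsqrtd D))) (⟨2, h2⟩ : nonZeroDivisors (Zsqrtd D)) with hx
  have hxspec : x * f 2 = f (1 + Zsqrtd.sqrtd) := IsLocalization.mk'_spec (FractionRing (Zsqrtd D)) _ _
  have hf2unit : IsUnit (f 2) := IsLocalization.map_units (FractionRing (Zsqrtd D)) (⟨2, h2⟩ : nonZeroDivisors (Zsqrtd D))
  -- key: for c ∈ I₀ there is d ∈ I₀ with 2d = (1+√D)c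
  have hsq : (Zsqrtd.sqrtd * Zsqrtd.sqrtd : (Zsqrtd D)) = (D : (Zsqrtd D)) := Zsqrtd.dmuld
  have key : ∀ c ∈ I₀, ∃ d ∈ I₀, 2 * d = (1 + Zsqrtd.sqrtd) * c := by
    intro c hc
    induction hc using Submodule.span_induction with
    | mem y hy =>
      rcases hy with hy | hy
      · refine ⟨(m₀ : (Zsqrtd D)) * (Zsqrtd.sqrtd + (μ : (Zsqrtd D))) - (t : (Zsqrtd D)) * (m : (Zsqrtd D)), ?_, ?_⟩
        · exact Submodule.sub_mem _
            (Ideal.mul_mem_left _ _ (Ideal.subset_span (Or.inr rfl)))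
            (Ideal.mul_mem_left _ _ (Ideal.subset_span (Or.inl rfl)))
        · subst hy
          have hmc : (m : (Zsqrtd D)) = (m₀ : (Zsqrtd D)) + (m₀ : (Zsqrtd D)) := by exact_mod_cast congrArg (fun z : ℤ => (z : (Zsqrtd D))) hm₀
          have hμc : (μ : (Zsqrtd D)) = 2 * (t : (Zsqrtd D)) + 1 := by exact_mod_cast congrArg (fun z : ℤ => (z : (Zsqrtd D))) ht
          rw [hmc, hμc]; ring
      · refine ⟨((t : (Zsqrtd D)) + 1) * (Zsqrtd.sqrtd + (μ : (Zsqrtd D))) + (k' : (Zsqrtd D)) * (m : (Zsqrtd D)), ?_, ?_⟩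
        · exact Submodule.add_mem _
            (Ideal.mul_mem_left _ _ (Ideal.subset_span (Or.inr rfl)))
            (Ideal.mul_mem_left _ _ (Ideal.subset_span (Or.inl rfl)))
        · subst hy
          have hμc : (μ : (Zsqrtd D)) = 2 * (t : (Zsqrtd D)) + 1 := by exact_mod_cast congrArg (fun z : ℤ => (z : (Zsqrtd D))) ht
          have hDc : (D : (Zsqrtd D)) = (μ : (Zsqrtd D)) ^ 2 + (m : (Zsqrtd D)) * ((k' : (Zsqrtd D)) + (k' : (Zsqrtd D))) := by
            exact_mod_cast congrArg (fun z : ℤ => (z : (Zsqrtd D))) hDeq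
          rw [hμc] at hDc ⊢
          linear_combination -hsq - hDc
    | zero => exact ⟨0, Submodule.zero_mem _, by ring⟩
    | add a b _ _ iha ihb =>
      obtain ⟨d₁, hd₁, e₁⟩ := iha
      obtain ⟨d₂, hd₂, e₂⟩ := ihb
      exact ⟨d₁ + d₂, Submodule.add_mem _ hd₁ hd₂, by rw [mul_add, mul_add, e₁, e₂]⟩
    | smul r c hc ih =>
      obtain ⟨d, hd, e⟩ := ih
      refine ⟨r • d, Submodule.smul_mem _ _ hd, ?_⟩
      rw [smul_eq_mul, smul_eq_mul]
      calc 2 * (r * d) = r * (2 * d) := by ring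
      _ = r * ((1 + Zsqrtd.sqrtd) * c) := by rw [e]
      _ = (1 + Zsqrtd.sqrtd) * (r * c) := by ring
  -- x • I₀ ⊆ I₀ as fractional ideals
  have hXI : FractionalIdeal.spanSingleton (nonZeroDivisors (Zsqrtd D)) x *
      (I₀ : FractionalIdeal (nonZeroDivisors (Zsqrtd D)) (FractionRing (Zsqrtd D))) ≤ (I₀ : FractionalIdeal (nonZeroDivisors (Zsqrtd D)) (FractionRing (Zsqrtd D))) := by
    rw [FractionalIdeal.spanSingleton_mul_le_iff]
    intro z hz
    obtain ⟨c, hc, rfl⟩ := (FractionalIdeal.mem_coeIdeal _).mp hz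
    obtain ⟨d, hd, e⟩ := key c hc
    refine (FractionalIdeal.mem_coeIdeal _).mpr ⟨d, hd, ?_⟩
    apply hf2unit.mul_left_cancel
    calc f 2 * f d = f (2 * d) := (map_mul f 2 d).symm
    _ = f ((1 + Zsqrtd.sqrtd) * c) := by rw [e]
    _ = f (1 + Zsqrtd.sqrtd) * f c := map_mul f _ _
    _ = (x * f 2) * f c := by rw [hxspec]
    _ = f 2 * (x * f c) := by ring
  -- conclude x ∈ 1
  have hxone : x ∈ (1 : FractionalIdeal (nonZeroDivisors (Zsqrtd D)) (FractionRing (Zsqrtd D))) := by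
    have hle : FractionalIdeal.spanSingleton (nonZeroDivisors (Zsqrtd D)) x ≤ 1 := by
      calc FractionalIdeal.spanSingleton (nonZeroDivisors (Zsqrtd D)) x
          = FractionalIdeal.spanSingleton (nonZeroDivisors (Zsqrtd D)) x *
              ((I₀ : FractionalIdeal (nonZeroDivisors (Zsqrtd D)) (FractionRing (Zsqrtd D))) * J) := by rw [hJ, mul_one]
        _ = (FractionalIdeal.spanSingleton (nonZeroDivisors (Zsqrtd D)) x *
              (I₀ : FractionalIdeal (nonZeroDivisors (Zsqrtd D)) (FractionRing (Zsqrtd D)))) * J := (mul_assoc _ _ _).symm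
        _ ≤ (I₀ : FractionalIdeal (nonZeroDivisors (Zsqrtd D)) (FractionRing (Zsqrtd D))) * J :=
            mul_le_mul' hXI (le_refl J)
        _ = 1 := hJ
    exact hle (FractionalIdeal.mem_spanSingleton_self _ _)
  obtain ⟨y, hy⟩ := (FractionalIdeal.mem_one_iff _).mp hxone
  have : (2 : (Zsqrtd D)) * y = 1 + Zsqrtd.sqrtd := by
    apply hfinj
    rw [map_mul]
    rw [hy]
    rw [mul_comm]
    exact hxspec
  have h2y : ((2 : ℤ) : (Zsqrtd D)) * y = 1 + Zsqrtd.sqrtd := by exact_mod_cast this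
  have hre := congrArg Zsqrtd.re h2y
  rw [Zsqrtd.re_mul, Zsqrtd.re_intCast, Zsqrtd.im_intCast, Zsqrtd.re_add,
    Zsqrtd.re_one, Zsqrtd.re_sqrtd] at hre
  simp only [zero_mul, mul_zero, add_zero] at hre
  omega
end

section
/- Let D ≡ 5 (mod 8) be square-free and let μ, m be integers with m > 0 and μ² ≡ D (mod m). Then the ideal (m, μ + √D) of ℤ[√D] is invertible if and only if m ≢ 2 (mod 4). -/
lemma sq_mod_eight (μ : ℤ) : μ^2 % 8 = 0 ∨ μ^2 % 8 = 1 ∨ μ^2 % 8 = 4 := by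
  have h2 : μ^2 % 8 = (μ % 8) * (μ % 8) % 8 := by rw [sq, Int.mul_emod]
  have h : μ % 8 = 0 ∨ μ % 8 = 1 ∨ μ % 8 = 2 ∨ μ % 8 = 3 ∨ μ % 8 = 4 ∨ μ % 8 = 5 ∨
      μ % 8 = 6 ∨ μ % 8 = 7 := by omega
  rcases h with h|h|h|h|h|h|h|h <;> rw [h2, h] <;> norm_num

lemma odd_sq_mod_eight (μ : ℤ) (h : μ % 2 = 1) : μ^2 % 8 = 1 := by
  have h2 : μ^2 % 8 = (μ % 8) * (μ % 8) % 8 := by rw [sq, Int.mul_emod]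
  have h8 : μ % 8 = 1 ∨ μ % 8 = 3 ∨ μ % 8 = 5 ∨ μ % 8 = 7 := by omega
  rcases h8 with h8|h8|h8|h8 <;> rw [h2, h8] <;> norm_num

lemma nonsq_of_mod8 (D : ℤ) (hD8 : D % 8 = 5) : ∀ n : ℤ, D ≠ n * n := by
  intro n hn
  have := sq_mod_eight n
  rw [sq] at this
  omega

/-- Bezout-type combination for three integers whose gcd is 1. -/
lemma gcd_combo (D μ m n : ℤ) (hsf : Squarefree D) (hD8 : D % 8 = 5) (hm : 0 < m)
    (hmn : μ ^ 2 - D = m * n) (hm2 : ¬ m % 4 = 2) :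
    ∃ a b c : ℤ, a * m + b * (2 * μ) + c * n = 1 := by
  have hg : Int.gcd (Int.gcd m (2 * μ)) n = 1 := by
    by_contra hne
    obtain ⟨p, hp, hpd⟩ := Nat.exists_prime_and_dvd hne
    have hpm : (p : ℤ) ∣ m := dvd_trans (Int.natCast_dvd_natCast.mpr
      (dvd_trans hpd (Nat.gcd_dvd_left _ _))) (Int.gcd_dvd_left _ _)
    have hp2μ : (p : ℤ) ∣ 2 * μ := dvd_trans (Int.natCast_dvd_natCast.mpr
      (dvd_trans hpd (Nat.gcd_dvd_left _ _))) (Int.gcd_dvd_right _ _)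
    have hpn : (p : ℤ) ∣ n := dvd_trans (Int.natCast_dvd_natCast.mpr hpd) (Int.gcd_dvd_right _ _)
    rcases eq_or_ne p 2 with rfl | hp2
    · -- p = 2 : then 4 ∣ m so 8 ∣ m*n, contradicting μ² ≡ 5 mod 8
      have h4 : (4 : ℤ) ∣ m := by
        obtain ⟨k, hk⟩ := hpm
        push_cast at hk
        omega
      have h8 : (8 : ℤ) ∣ m * n := by
        obtain ⟨k, hk⟩ := h4
        obtain ⟨l, hl⟩ := hpn
        push_cast at hl
        refine ⟨k * l, by rw [hk, hl]; ring⟩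
      have := sq_mod_eight μ
      obtain ⟨t, ht⟩ := h8
      omega
    · -- p odd : p ∣ μ, so p² ∣ D, contradicting squarefree
      have hpP : Prime (p : ℤ) := Nat.prime_iff_prime_int.mp hp
      have hpμ : (p : ℤ) ∣ μ := by
        rcases (hpP.dvd_mul).mp hp2μ with h | h
        · exfalso
          have h2 : p ∣ 2 := by simpa using Int.natAbs_dvd_natAbs.mpr h
          exact hp2 ((Nat.prime_dvd_prime_iff_eq hp Nat.prime_two).mp h2)
        · exact h
      have hpp : (p : ℤ) * p ∣ D := by
        have h1 : (p : ℤ) * p ∣ μ ^ 2 := by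
          obtain ⟨k, hk⟩ := hpμ; exact ⟨k * k, by rw [hk]; ring⟩
        have h2 : (p : ℤ) * p ∣ m * n := mul_dvd_mul hpm hpn
        have hD : D = μ ^ 2 - m * n := by omega
        rw [hD]; exact dvd_sub h1 h2
      have := hsf (p : ℤ) hpp
      rw [Int.isUnit_iff] at this
      have := hp.two_le
      omega
  have e1 : (Int.gcd m (2 * μ) : ℤ) = m * Int.gcdA m (2 * μ) + 2 * μ * Int.gcdB m (2 * μ) :=
    Int.gcd_eq_gcd_ab m (2 * μ)
  have e2 : ((Int.gcd (Int.gcd m (2 * μ)) n : ℤ)) =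
      (Int.gcd m (2 * μ) : ℤ) * Int.gcdA (Int.gcd m (2 * μ)) n +
        n * Int.gcdB (Int.gcd m (2 * μ)) n := Int.gcd_eq_gcd_ab _ n
  rw [hg] at e2
  refine ⟨Int.gcdA m (2 * μ) * Int.gcdA (Int.gcd m (2 * μ)) n,
    Int.gcdB m (2 * μ) * Int.gcdA (Int.gcd m (2 * μ)) n,
    Int.gcdB (Int.gcd m (2 * μ)) n, ?_⟩
  push_cast at e2
  linear_combination (-1 : ℤ) * e2 - (Int.gcdA (Int.gcd m (2 * μ)) n) * e1

noncomputable section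
/-- For `D` squarefree with `D ≡ 5 (mod 8)`, `m > 0`, `μ² ≡ D (mod m)`,
the ideal `(m, μ + √D)` of `ℤ[√D]` is invertible iff `m ≢ 2 (mod 4)`. -/
theorem stmt_9 (D : ℤ) (hsf : Squarefree D) (hD8 : D % 8 = 5)
    (μ m : ℤ) (hm : 0 < m) (hroot : m ∣ D - μ ^ 2) :
    (∃ J : FractionalIdeal (nonZeroDivisors (Zsqrtd D)) (FractionRing (Zsqrtd D)),
        (↑(Ideal.span {(m : Zsqrtd D), (μ : Zsqrtd D) + Zsqrtd.sqrtd}) :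
          FractionalIdeal (nonZeroDivisors (Zsqrtd D)) (FractionRing (Zsqrtd D))) * J = 1)
      ↔ ¬ m % 4 = 2 := by
  haveI : NoZeroDivisors (Zsqrtd D) := by
    constructor
    intro a b hab
    have h := Zsqrtd.norm_eq_zero (nonsq_of_mod8 D hD8)
    have : a.norm * b.norm = 0 := by rw [← Zsqrtd.norm_mul, hab, Zsqrtd.norm_zero]
    rcases mul_eq_zero.mp this with h0 | h0
    · exact Or.inl ((h a).mp h0)
    · exact Or.inr ((h b).mp h0)
  haveI : IsDomain (Zsqrtd D) := NoZeroDivisors.to_isDomain _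
  set R := Zsqrtd D
  set K := FractionRing R
  set S := nonZeroDivisors R
  set s : R := Zsqrtd.sqrtd with hs_def
  obtain ⟨n, hmn⟩ : ∃ n : ℤ, μ ^ 2 - D = m * n := by
    obtain ⟨t, ht⟩ := hroot; exact ⟨-t, by rw [mul_neg, ← ht]; ring⟩
  have hsq : s * s = (D : R) := Zsqrtd.dmuld
  have hcR : ((μ : R))^2 - (D : R) = (m : R) * (n : R) := by
    have := congrArg (Int.castRingHom R) hmn; simp only [map_mul, map_pow, map_sub, map_add, map_ofNat, eq_intCast] at this; exact this
  have hkey : ((μ : R) + s) * ((μ : R) - s) = (m : R) * (n : R) := by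
    linear_combination hcR - hsq
  set I : Ideal R := Ideal.span {(m : R), (μ : R) + s} with hI_def
  set Ibar : Ideal R := Ideal.span {(m : R), (μ : R) - s} with hIbar_def
  have φinj : Function.Injective (algebraMap R K) := IsFractionRing.injective R K
  have hmR : (m : R) ≠ 0 := by
    simp only [Ne, Zsqrtd.ext_iff]; push_cast; simp; omega
  have hmK : algebraMap R K (m : R) ≠ 0 := fun h => hmR (φinj (by simpa using h))
  constructor
  · rintro ⟨J, hJ⟩ hm2
    -- μ is odd
    obtain ⟨t, ht⟩ := hroot
    obtain ⟨m', hm'⟩ : ∃ m', m = 2 * m' := ⟨m / 2, by omega⟩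
    have hm'odd : m' % 2 = 1 := by omega
    have hmt2 : m * t = 2 * (m' * t) := by rw [hm']; ring
    have hμodd : μ % 2 = 1 := by
      rcases Int.even_or_odd μ with ⟨u, hu⟩ | ⟨u, hu⟩
      · exfalso
        have hsqu : μ ^ 2 = 2 * (2 * (u * u)) := by rw [hu]; ring
        omega
      · omega
    have hμ8 : μ ^ 2 % 8 = 1 := odd_sq_mod_eight μ hμodd
    have hmt8 : (m * t) % 8 = 4 := by omega
    -- t is even
    obtain ⟨w, hw⟩ : ∃ w, t = 2 * w := by
      rcases Int.even_or_odd t with ⟨u, hu⟩ | ⟨u, hu⟩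
      · exact ⟨u, by omega⟩
      · exfalso
        have h1 : m * t = 2 * (m' * t) := by rw [hm']; ring
        have h2 : (m' * t) % 2 = 1 := by
          rw [Int.mul_emod, hm'odd, hu]
          omega
        omega
    set φ := algebraMap R K with hφ_def
    have h2R : (2 : R) ≠ 0 := two_ne_zero
    have h2K : φ (2 : R) ≠ 0 := fun h => h2R (φinj (by simpa using h))
    set x : K := φ ((μ : R) + s) * (φ (2 : R))⁻¹ with hx_def
    -- the multiplier property
    have hDμ : (D : R) - ((μ : R))^2 = (m : R) * (t : R) := by
      have := congrArg (Int.castRingHom R) ht; simp only [map_mul, map_pow, map_sub, map_add, map_ofNat, eq_intCast] at this; exact this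
    have hwc : ((t : ℤ) : R) = 2 * ((w : ℤ) : R) := by
      have := congrArg (Int.castRingHom R) hw; simp only [map_mul, map_pow, map_sub, map_add, map_ofNat, eq_intCast] at this; exact this
    have g1I : (m : R) ∈ I := Ideal.subset_span (by simp)
    have g2I : (μ : R) + s ∈ I := Ideal.subset_span (by simp)
    have key : ∀ i ∈ I, x * φ i ∈ ((↑I : FractionalIdeal S K) : Submodule R K) := by
      intro i hi
      refine Submodule.span_induction ?_ ?_ ?_ ?_ hi
      · rintro g (rfl | rfl)
        · -- generator m
          have hmRc : ((m : ℤ) : R) = 2 * ((m' : ℤ) : R) := by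
            have := congrArg (Int.castRingHom R) hm'; simp only [map_mul, map_pow, map_sub, map_add, map_ofNat, eq_intCast] at this; exact this
          have e : x * φ ((m : ℤ) : R) = φ (((μ : R) + s) * ((m' : ℤ) : R)) := by
            rw [hmRc, map_mul, map_mul]
            simp only [hx_def, mul_assoc, inv_mul_cancel_left₀ h2K]
          rw [e]
          exact FractionalIdeal.mem_coe.mpr ((FractionalIdeal.mem_coeIdeal _).mpr
            ⟨_, Ideal.mul_mem_right _ _ g2I, rfl⟩)
        · -- generator μ + s
          set e₀ : R := (μ : R) * ((μ : R) + s) + (m : R) * ((w : ℤ) : R) with he₀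
          have h2e : ((μ : R) + s)^2 = 2 * e₀ := by
            rw [he₀]
            linear_combination hsq + hDμ + (m : R) * hwc
          have e : x * φ ((μ : R) + s) = φ e₀ := by
            rw [hx_def]
            rw [show φ ((μ : R) + s) * (φ (2:R))⁻¹ * φ ((μ : R) + s)
              = φ (((μ : R) + s)^2) * (φ (2:R))⁻¹ by rw [map_pow]; ring]
            rw [h2e, map_mul]
            rw [mul_comm (φ (2:R)), mul_inv_cancel_right₀ h2K]
          rw [e]
          have he₀I : e₀ ∈ I := Submodule.add_mem _ (Ideal.mul_mem_left _ _ g2I)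
            (Ideal.mul_mem_right _ _ g1I)
          exact FractionalIdeal.mem_coe.mpr ((FractionalIdeal.mem_coeIdeal _).mpr
            ⟨_, he₀I, rfl⟩)
      · simp
      · intro y z _ _ hy hz
        rw [map_add, mul_add]
        exact Submodule.add_mem _ hy hz
      · intro r y _ hy
        have : x * φ (r • y) = r • (x * φ y) := by
          rw [smul_eq_mul, map_mul, Algebra.smul_def]
          ring
        rw [this]
        exact Submodule.smul_mem _ _ hy
    have hle : FractionalIdeal.spanSingleton S x * ↑I ≤ (↑I : FractionalIdeal S K) := by
      rw [FractionalIdeal.mul_le]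
      intro i hi j hj
      obtain ⟨z, rfl⟩ := (FractionalIdeal.mem_spanSingleton S).mp hi
      obtain ⟨j₀, hj₀, rfl⟩ := (FractionalIdeal.mem_coeIdeal S).mp hj
      rw [smul_mul_assoc]
      exact FractionalIdeal.mem_coe.mpr
        (FractionalIdeal.mem_coe.mp
          (Submodule.smul_mem _ _ (key j₀ hj₀)))
    have hxle : FractionalIdeal.spanSingleton S x ≤ 1 := by
      calc FractionalIdeal.spanSingleton S x
          = FractionalIdeal.spanSingleton S x * ((↑I : FractionalIdeal S K) * J) := by
            rw [hJ, mul_one]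
        _ = (FractionalIdeal.spanSingleton S x * ↑I) * J := (mul_assoc _ _ _).symm
        _ ≤ ↑I * J := by gcongr
        _ = 1 := hJ
    have hx1 : x ∈ (1 : FractionalIdeal S K) :=
      hxle ((FractionalIdeal.mem_spanSingleton S).mpr ⟨1, one_smul _ _⟩)
    obtain ⟨y, hy⟩ := (FractionalIdeal.mem_one_iff S).mp hx1
    have h2y : (2 : R) * y = (μ : R) + s := by
      apply φinj
      rw [map_mul, hy, hx_def]
      rw [mul_comm (φ (2:R)), inv_mul_cancel_right₀ h2K]
    have := congrArg Zsqrtd.im h2y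
    rw [Zsqrtd.im_mul, Zsqrtd.im_add, Zsqrtd.re_ofNat, Zsqrtd.im_ofNat,
      Zsqrtd.im_intCast, hs_def, Zsqrtd.im_sqrtd] at this
    push_cast at this
    omega
  · intro hm2
    obtain ⟨a, b, c, habc⟩ := gcd_combo D μ m n hsf hD8 hm hmn hm2
    have hprod : I * Ibar = Ideal.span {(m : R)} := by
      apply le_antisymm
      · rw [Ideal.mul_le]
        intro r hr t ht
        rw [hI_def, Ideal.span, Submodule.mem_span_pair] at hr
        rw [hIbar_def, Ideal.span, Submodule.mem_span_pair] at ht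
        obtain ⟨z1, z2, rfl⟩ := hr
        obtain ⟨w1, w2, rfl⟩ := ht
        rw [Ideal.mem_span_singleton]
        refine ⟨z1 * w1 * m + z1 * w2 * ((μ : R) - s) + z2 * w1 * ((μ : R) + s)
          + z2 * w2 * (n : R), ?_⟩
        simp only [smul_eq_mul]
        linear_combination (z2 * w2) * hkey
      · rw [Ideal.span_le, Set.singleton_subset_iff]
        have g1I : (m : R) ∈ I := Ideal.subset_span (by simp)
        have g2I : (μ : R) + s ∈ I := Ideal.subset_span (by simp)
        have g1B : (m : R) ∈ Ibar := Ideal.subset_span (by simp)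
        have g2B : (μ : R) - s ∈ Ibar := Ideal.subset_span (by simp)
        have t1 : (m : R) * (m : R) ∈ I * Ibar := Ideal.mul_mem_mul g1I g1B
        have t2 : (m : R) * ((μ : R) - s) ∈ I * Ibar := Ideal.mul_mem_mul g1I g2B
        have t3 : ((μ : R) + s) * (m : R) ∈ I * Ibar := Ideal.mul_mem_mul g2I g1B
        have t4 : ((μ : R) + s) * ((μ : R) - s) ∈ I * Ibar := Ideal.mul_mem_mul g2I g2B
        have hsum : (m : R) = (a : R) * ((m:R)*(m:R)) + (b : R) * ((m:R)*((μ:R)-s)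
            + ((μ:R)+s)*(m:R)) + (c : R) * (((μ:R)+s)*((μ:R)-s)) := by
          have hZ : (a:R)*(m:R) + (b:R)*(2*(μ:R)) + (c:R)*(n:R) = 1 := by
            have := congrArg (Int.castRingHom R) habc; simp only [map_mul, map_pow, map_sub, map_add, map_ofNat, eq_intCast] at this; exact this
          push_cast at hZ
          linear_combination (-(m : R)) * hZ - (c : R) * hkey
        rw [hsum]
        exact Submodule.add_mem _ (Submodule.add_mem _ (Ideal.mul_mem_left _ _ t1)
          (Ideal.mul_mem_left _ _ (Submodule.add_mem _ t2 t3))) (Ideal.mul_mem_left _ _ t4)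
    refine ⟨FractionalIdeal.spanSingleton S (algebraMap R K (m : R))⁻¹ * ↑Ibar, ?_⟩
    rw [← mul_assoc, mul_comm (↑I : FractionalIdeal S K), mul_assoc,
      ← FractionalIdeal.coeIdeal_mul, hprod, FractionalIdeal.coeIdeal_span_singleton,
      FractionalIdeal.spanSingleton_mul_spanSingleton, inv_mul_cancel₀ hmK,
      FractionalIdeal.spanSingleton_one]
end
end

section
/- Let M be a 2×2 integer matrix such that for all coprime integers a, b, the two entries of the vector M·(a, b)ᵀ are coprime. Then M is in GL(2, ℤ), i.e. det M = ±1. -/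
/-!
The adjugate gives two integer vectors sent by `M` to `(det M, 0)` and `(0, det M)`. Dividing such
a vector by the gcd `g` of its entries gives a coprime pair, whose image `(det M / g, 0)` must
have coprime entries; so `det M = ±g`. Hence `det M` divides every entry of `M`, so
`(det M)² ∣ det M`, which forces `det M = ±1` once `M = 0` is excluded.
-/

lemma dvd_of_isCoprime_preserving {p q r s : ℤ}
    (h : ∀ a b : ℤ, IsCoprime a b → IsCoprime (p * a + q * b) (r * a + s * b))
    {x y n : ℤ} (hn : p * x + q * y = n) (h0 : r * x + s * y = 0) : n ∣ x ∧ n ∣ y := by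
  rcases (Int.gcd x y).eq_zero_or_pos with hg | hg
  · obtain ⟨rfl, rfl⟩ := Int.gcd_eq_zero_iff.mp hg
    simp [← hn]
  obtain ⟨g, a, b, hg_pos, hab, rfl, rfl⟩ := Int.exists_gcd_one' hg
  have hzero : r * a + s * b = 0 := by
    have : (g : ℤ) * (r * a + s * b) = 0 := by linear_combination h0
    simpa [hg_pos.ne'] using this
  have hunit := h a b (Int.isCoprime_iff_gcd_eq_one.mpr hab)
  rw [hzero, isCoprime_zero_right, Int.isUnit_iff] at hunit
  have hng : n ∣ g := by
    rcases hunit with hu | hu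
    · exact ⟨1, by linear_combination hn - (g : ℤ) * hu⟩
    · exact ⟨-1, by linear_combination -hn + (g : ℤ) * hu⟩
  exact ⟨hng.mul_left a, hng.mul_left b⟩

/-- If `M ∈ M₂(ℤ)` sends every coprime pair `(a, b)` to a vector with
coprime entries, then `M ∈ GL(2, ℤ)`, i.e. `det M = ±1`. -/
theorem stmt_10 (M : Matrix (Fin 2) (Fin 2) ℤ)
    (h : ∀ a b : ℤ, IsCoprime a b →
      IsCoprime (M 0 0 * a + M 0 1 * b) (M 1 0 * a + M 1 1 * b)) :
    M.det = 1 ∨ M.det = -1 := by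
  rw [Matrix.det_fin_two]
  set d := M 0 0 * M 1 1 - M 0 1 * M 1 0
  obtain ⟨hd11, hd10⟩ := dvd_of_isCoprime_preserving h (x := M 1 1) (y := -M 1 0) (n := d)
    (by ring) (by ring)
  obtain ⟨hd01, hd00⟩ := dvd_of_isCoprime_preserving (fun a b hab => (h a b hab).symm)
    (x := -M 0 1) (y := M 0 0) (n := d) (by ring) (by ring)
  rw [dvd_neg] at hd10 hd01
  have hdd : d * d ∣ d * 1 := by
    rw [mul_one]
    exact dvd_sub (mul_dvd_mul hd00 hd11) (mul_dvd_mul hd01 hd10)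
  rcases eq_or_ne d 0 with hd | hd
  · simp only [hd, zero_dvd_iff] at hd00 hd01 hd10 hd11
    have h00 := h 1 0 isCoprime_one_left
    simp only [hd00, hd01, hd10, hd11, zero_mul, add_zero] at h00
    exact absurd h00 not_isCoprime_zero_zero
  · exact Int.isUnit_iff.mp (isUnit_of_dvd_one ((mul_dvd_mul_iff_left hd).mp hdd))
end

section
/- Let D ≡ 1 (mod 4) be square-free, and suppose μ, m satisfy μ² ≡ D (mod m) with m even and (D−μ²)/m = r odd (so 4 | m). Then in ℤ[√D], the product of ideals (m, μ + √D)·(2, 1 + √D) equals 2·(m/2, μ + √D). -/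
/-!
Write `m = 2k`, `μ = 2t + 1`, `(D - μ²)/m = 2s + 1` and `α = μ + √D`, so the right side is
`(m, 2α)`. Everything follows from `(√D)² = μ² + m(2s + 1)`, i.e.
`α(1 + √D) = (2s + 1)·m + (t + 1)·2α`: this puts the four product generators of the left side
into `(m, 2α)`, and, because `2s + 1` is odd, gives `m = α(1 + √D) - (t + 1)·2α - s·2m`
back in the left side.
-/

open Ideal

theorem Ideal.span_singleton_mul_span_pair {R : Type*} [CommRing R] (a b c : R) :
    span {a} * span {b, c} = span {a * b, a * c} := by
  rw [span_mul_span', Set.singleton_mul, Set.image_pair]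

theorem Ideal.span_pair_mul_span_two_one_add {R : Type*} [CommRing R] {ω k t s : R}
    (hω : ω * ω = (2 * t + 1) ^ 2 + 2 * k * (2 * s + 1)) :
    span {2 * k, 2 * t + 1 + ω} * span {2, 1 + ω} = span {2} * span {k, 2 * t + 1 + ω} := by
  set α := 2 * t + 1 + ω
  have hαω : α * (1 + ω) = (2 * s + 1) * (2 * k) + (t + 1) * (2 * α) := by
    linear_combination hω
  rw [span_singleton_mul_span_pair]
  apply le_antisymm
  · rw [span_pair_mul_span_pair, span_le]
    simp only [Set.insert_subset_iff, Set.singleton_subset_iff, SetLike.mem_coe, mem_span_pair]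
    exact ⟨⟨2, 0, by ring⟩, ⟨-2 * t, k, by ring⟩, ⟨0, 1, by ring⟩,
      ⟨2 * s + 1, t + 1, hαω.symm⟩⟩
  · have h2k : 2 * k ∈ span {2 * k, α} := subset_span (by simp)
    have hα : α ∈ span {2 * k, α} := subset_span (by simp)
    have h2 : 2 ∈ span {2, 1 + ω} := subset_span (by simp)
    have h1ω : 1 + ω ∈ span {2, 1 + ω} := subset_span (by simp)
    have hmem := sub_mem
      (sub_mem (mul_mem_mul hα h1ω) (mul_mem_left _ (t + 1) (mul_mem_mul hα h2)))
      (mul_mem_left _ s (mul_mem_mul h2k h2))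
    rw [show α * (1 + ω) - (t + 1) * (α * 2) - s * (2 * k * 2) = 2 * k by
      linear_combination hαω] at hmem
    rw [span_le, Set.pair_subset_iff]
    exact ⟨hmem, mul_comm α 2 ▸ mul_mem_mul hα h2⟩

theorem stmt_15_general (D : ℤ) (hD4 : D % 4 = 1)
    (μ m : ℤ) (hm : 0 < m) (hroot : m ∣ D - μ ^ 2)
    (hme : Even m) (hfo : Odd ((D - μ ^ 2) / m)) :
    Ideal.span {(m : Zsqrtd D), (μ : Zsqrtd D) + Zsqrtd.sqrtd} *
        Ideal.span {(2 : Zsqrtd D), 1 + Zsqrtd.sqrtd} =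
      Ideal.span {(2 : Zsqrtd D)} *
        Ideal.span {((m / 2 : ℤ) : Zsqrtd D), (μ : Zsqrtd D) + Zsqrtd.sqrtd} := by
  obtain ⟨r, hr⟩ := hroot
  rw [hr, Int.mul_ediv_cancel_left _ hm.ne'] at hfo
  obtain ⟨s, rfl⟩ := hfo
  obtain ⟨k, rfl⟩ := even_iff_two_dvd.1 hme
  have hμ : Odd (μ ^ 2) := by
    rw [show μ ^ 2 = D - 2 * (k * (2 * s + 1)) by linarith]
    exact (Int.odd_iff.2 (by omega)).sub_even (even_two_mul _)
  obtain ⟨t, rfl⟩ := (Int.odd_pow.1 hμ).resolve_right two_ne_zero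
  have hω : (Zsqrtd.sqrtd : Zsqrtd D) * Zsqrtd.sqrtd =
      (((2 * t + 1) ^ 2 + 2 * k * (2 * s + 1) : ℤ) : Zsqrtd D) := by
    rw [Zsqrtd.dmuld]
    exact congrArg _ (by linarith)
  push_cast at hω
  rw [Int.mul_ediv_cancel_left _ two_ne_zero]
  push_cast
  exact span_pair_mul_span_two_one_add hω

/-- For `D` squarefree with `D ≡ 1 (mod 4)`, `μ² ≡ D (mod m)`, `m` even,
`(D−μ²)/m` odd, and `4 ∣ m`: in `ℤ[√D]`,
`(m, μ + √D)·(2, 1 + √D) = 2·(m/2, μ + √D)`. -/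
theorem stmt_15 (D : ℤ) (hsf : Squarefree D) (hD4 : D % 4 = 1)
    (μ m : ℤ) (hm : 0 < m) (hroot : m ∣ D - μ ^ 2)
    (hme : Even m) (hfo : Odd ((D - μ ^ 2) / m)) (h4 : 4 ∣ m) :
    Ideal.span {(m : Zsqrtd D), (μ : Zsqrtd D) + Zsqrtd.sqrtd} *
        Ideal.span {(2 : Zsqrtd D), 1 + Zsqrtd.sqrtd} =
      Ideal.span {(2 : Zsqrtd D)} *
        Ideal.span {((m / 2 : ℤ) : Zsqrtd D), (μ : Zsqrtd D) + Zsqrtd.sqrtd} :=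
  stmt_15_general D hD4 μ m hm hroot hme hfo
end

section
/- For real q, v with v² + q² − 1 > 0 and appropriate domains, define y = √(v² + q² − 1), s₁ = (−q + y)/(v + 1), s₂ = v − q − y, and h_q(s) = log((s + q)/(1 − s²)). Then h_q(s₁) − h_q(s₂) = 2·log(q + √(v² + q² − 1)). -/
/-- With `y = √(v² + q² − 1)`, `s₁ = (−q + y)/(v + 1)`, `s₂ = v − q − y`,
and `h_q(s) = log((s + q)/(1 − s²))`, for `v > 1`, `|q| < 1`, `v > √(2 − 2q)` one has
`h_q(s₁) − h_q(s₂) = 2·log(q + √(v² + q² − 1))`. -/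
theorem stmt_17 (q v y s₁ s₂ : ℝ) (hv : 1 < v) (hq : |q| < 1)
    (hv2 : Real.sqrt (2 - 2 * q) < v)
    (hy : y = Real.sqrt (v ^ 2 + q ^ 2 - 1))
    (hs₁ : s₁ = (-q + y) / (v + 1)) (hs₂ : s₂ = v - q - y) :
    Real.log ((s₁ + q) / (1 - s₁ ^ 2)) - Real.log ((s₂ + q) / (1 - s₂ ^ 2)) =
      2 * Real.log (q + Real.sqrt (v ^ 2 + q ^ 2 - 1)) := by
  have hq1 : q ^ 2 < 1 := by
    have := abs_lt.mp hq
    nlinarith [this.1, this.2]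
  obtain ⟨hqa, hqb⟩ := abs_lt.mp hq
  have hpos : (0:ℝ) ≤ v ^ 2 + q ^ 2 - 1 := by nlinarith
  have hy2 : y ^ 2 = v ^ 2 + q ^ 2 - 1 := by
    rw [hy]; exact Real.sq_sqrt hpos
  have hy0 : 0 ≤ y := hy ▸ Real.sqrt_nonneg _
  have hqy : q ^ 2 < y ^ 2 := by nlinarith
  have hyq1 : 0 < y + q := by nlinarith
  have hyq2 : 0 < y - q := by nlinarith
  have hvy : y < v := by nlinarith
  have hv1 : (0:ℝ) < v + 1 := by linarith
  have hv21 : (0:ℝ) < v ^ 2 - 1 := by nlinarith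
  -- first fraction
  have hs1a : 0 < s₁ := by
    rw [hs₁]; exact div_pos (by linarith) hv1
  have hs1b : s₁ < 1 := by
    rw [hs₁, div_lt_one hv1]; linarith
  have hd1 : 0 < 1 - s₁ ^ 2 := by nlinarith
  have hA : (s₁ + q) / (1 - s₁ ^ 2) = (y + q) / 2 := by
    rw [div_eq_div_iff (ne_of_gt hd1) two_ne_zero, hs₁]
    field_simp
    linear_combination (y - q) * hy2
  have hd2 : 0 < 1 - s₂ ^ 2 := by
    rw [hs₂]; nlinarith
  have hB : (s₂ + q) / (1 - s₂ ^ 2) = (y - q) / (2 * (v ^ 2 - 1)) := by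
    rw [hs₂]
    rw [div_eq_div_iff (by nlinarith [hd2, hs₂]) (by positivity)]
    linear_combination (q + y - 2 * v) * hy2
  rw [hA, hB, ← hy]
  have hqy1 : 0 < q + y := by linarith
  have hkey : (y + q) / 2 = (y - q) / (2 * (v ^ 2 - 1)) * (q + y) ^ 2 := by
    rw [div_mul_eq_mul_div, div_eq_div_iff (by norm_num) (by positivity)]
    linear_combination (-2) * (q + y) * hy2
  rw [hkey,
    Real.log_mul (ne_of_gt (div_pos hyq2 (by linarith))) (pow_ne_zero 2 (ne_of_gt hqy1)),
    Real.log_pow]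
  push_cast
  ring
end
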